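/- Hilbert 90 conjugation lemma for quaternion algebras: Let B = F + Fi + Fj + Fij be a quaternion algebra over a field F of characteristic ≠ 2 with i² = a ∈ F*, j² = b ∈ F*, ij = -ji. Suppose ι ∈ B satisfies ι² = a and ιj = -jι. Then there exists an invertible γ ∈ F(j) (the subalgebra F + Fj) such that γ⁻¹ ι γ = i. -/

import Mathlib

open Quaternion

namespace QuaternionAlgebra

theorem isUnit_of_isUnit_re_mul_star {R : Type*} [CommRing R] {c₁ c₂ c₃ : R}
    (q : ℍ[R, c₁, c₂, c₃]) (h : IsUnit (q * star q).re) : IsUnit q := by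
  set n := h.unit
  have hmul : q * star q = ((n : R) : ℍ[R, c₁, c₂, c₃]) := mul_star_eq_coe q
  have hstar : star q * q = ((n : R) : ℍ[R, c₁, c₂, c₃]) := by rw [star_comm_self', hmul]
  refine ⟨⟨q, (↑n⁻¹ : R) • star q, ?_, ?_⟩, rfl⟩
  · rw [mul_smul_comm, hmul, smul_coe, Units.inv_mul, coe_one]
  · rw [smul_mul_assoc, hstar, smul_coe, Units.inv_mul, coe_one]

section

variable {R : Type*} [CommRing R] {a b : R}

theorem exists_eq_mk_of_mul_j_eq_neg_j_mul [NoZeroDivisors R] (h2 : (2 : R) ≠ 0) (hb : b ≠ 0)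
    {q : ℍ[R, a, b]} (h : q * ⟨0, 0, 1, 0⟩ = -((⟨0, 0, 1, 0⟩ : ℍ[R, a, b]) * q)) :
    ∃ x z : R, q = ⟨0, x, 0, z⟩ := by
  have h_imJ : b * (2 * q.imJ) = 0 := by
    have := congrArg re h
    simp only [re_mul, re_neg] at this
    linear_combination this
  have h_re : 2 * q.re = 0 := by
    have := congrArg imJ h
    simp only [imJ_mul, imJ_neg] at this
    linear_combination this
  refine ⟨q.imI, q.imK, ?_⟩
  ext
  · simpa [h2] using h_re
  · rfl
  · simpa [h2, hb] using h_imJ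
  · rfl

theorem mk_zero_sq (x z : R) :
    (⟨0, x, 0, z⟩ : ℍ[R, a, b]) ^ 2 = algebraMap R ℍ[R, a, b] (a * (x ^ 2 - b * z ^ 2)) := by
  rw [sq, mk_mul_mk, coe_algebraMap]
  ext <;> simp only [re_coe, imI_coe, imJ_coe, imK_coe] <;> ring

/-- Writing `ι = i (x + z j)` and `γ = p + q j`, the relation `ι γ = γ i = i γ̄` becomes
`(x + z j) γ = γ̄` in `R(j)`, which is the pair of hypotheses. -/
theorem mk_zero_mul_mk_eq_mul_i {x z p q : R} (h₁ : x * p + b * z * q = p)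
    (h₂ : x * q + z * p = -q) :
    (⟨0, x, 0, z⟩ : ℍ[R, a, b]) * ⟨p, 0, q, 0⟩ = ⟨p, 0, q, 0⟩ * ⟨0, 1, 0, 0⟩ := by
  ext <;> simp [h₁, h₂]

end

section

variable {F : Type*} [Field F] {a b : F}

theorem isUnit_mk_of_sq_sub_ne_zero {p q : F} (h : p ^ 2 - b * q ^ 2 ≠ 0) :
    IsUnit (⟨p, 0, q, 0⟩ : ℍ[F, a, b]) := by
  refine isUnit_of_isUnit_re_mul_star _ (IsUnit.mk0 _ ?_)
  convert h using 1
  simp only [star_mk, mk_mul_mk]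
  ring

/-- Hilbert 90 for the norm-one element `u = x + z j` of `F(j)`: `γ = 1 + ū` satisfies
`u γ = γ̄`, and has norm `2 (1 + x)`; when this vanishes, `u = -1` and `γ = j` works. -/
theorem exists_isUnit_mk_mul_i (h2 : (2 : F) ≠ 0) (hb : b ≠ 0) {x z : F}
    (hn : x ^ 2 - b * z ^ 2 = 1) :
    ∃ p q : F, IsUnit (⟨p, 0, q, 0⟩ : ℍ[F, a, b]) ∧
      (⟨0, x, 0, z⟩ : ℍ[F, a, b]) * ⟨p, 0, q, 0⟩ = ⟨p, 0, q, 0⟩ * ⟨0, 1, 0, 0⟩ := by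
  by_cases hx : x = -1
  · have hz : z = 0 := by
      have : b * z ^ 2 = 0 := by rw [hx] at hn; linear_combination -hn
      simpa [hb] using this
    subst hx hz
    exact ⟨0, 1, isUnit_mk_of_sq_sub_ne_zero (by simpa using hb),
      mk_zero_mul_mk_eq_mul_i (by ring) (by ring)⟩
  · have hx1 : 1 + x ≠ 0 := fun h ↦ hx (by linear_combination h)
    refine ⟨1 + x, -z, isUnit_mk_of_sq_sub_ne_zero ?_,
      mk_zero_mul_mk_eq_mul_i (by linear_combination hn) (by ring)⟩
    have : (1 + x) ^ 2 - b * (-z) ^ 2 = 2 * (1 + x) := by linear_combination hn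
    rw [this]
    exact mul_ne_zero h2 hx1

end

end QuaternionAlgebra

open QuaternionAlgebra in
theorem stmt5_general (F : Type*) [Field F] (h2 : (2 : F) ≠ 0) (a b : F)
    (ha : a ≠ 0) (hb : b ≠ 0)
    (ι : ℍ[F, a, b]) (hι2 : ι ^ 2 = algebraMap F ℍ[F, a, b] a)
    (hanti : ι * (⟨0, 0, 1, 0⟩ : ℍ[F, a, b]) = -((⟨0, 0, 1, 0⟩ : ℍ[F, a, b]) * ι)) :
    ∃ γ : (ℍ[F, a, b])ˣ,
      (∃ x y : F, (γ : ℍ[F, a, b]) = ⟨x, 0, y, 0⟩) ∧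
        (↑γ⁻¹ * ι * ↑γ = (⟨0, 1, 0, 0⟩ : ℍ[F, a, b])) := by
  obtain ⟨x, z, rfl⟩ := exists_eq_mk_of_mul_j_eq_neg_j_mul h2 hb hanti
  have hn : x ^ 2 - b * z ^ 2 = 1 := by
    rw [mk_zero_sq, (algebraMap F ℍ[F, a, b]).injective.eq_iff] at hι2
    exact mul_left_cancel₀ ha (hι2.trans (mul_one a).symm)
  obtain ⟨p, q, hγ, hconj⟩ := exists_isUnit_mk_mul_i h2 hb hn
  refine ⟨hγ.unit, ⟨p, q, rfl⟩, ?_⟩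
  rw [mul_assoc, Units.inv_mul_eq_iff_eq_mul]
  exact hconj

/-- Hilbert 90 conjugation lemma: in `B = (a,b/F)` with standard generators `i, j`,
if `ι² = a` and `ιj = -jι`, and `F(j) = F + Fj` is a field (`b` not a square),
then there exists an invertible `γ ∈ F + Fj` with `γ⁻¹ ι γ = i`. -/
theorem stmt5 (F : Type*) [Field F] (h2 : (2 : F) ≠ 0) (a b : F)
    (ha : a ≠ 0) (hb : b ≠ 0) (hbns : ¬ ∃ t : F, t ^ 2 = b)
    (ι : ℍ[F, a, b]) (hι2 : ι ^ 2 = algebraMap F ℍ[F, a, b] a)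
    (hanti : ι * (⟨0, 0, 1, 0⟩ : ℍ[F, a, b]) = -((⟨0, 0, 1, 0⟩ : ℍ[F, a, b]) * ι)) :
    ∃ γ : (ℍ[F, a, b])ˣ,
      (∃ x y : F, (γ : ℍ[F, a, b]) = ⟨x, 0, y, 0⟩) ∧
        (↑γ⁻¹ * ι * ↑γ = (⟨0, 1, 0, 0⟩ : ℍ[F, a, b])) :=
  stmt5_general F h2 a b ha hb ι hι2 hanti
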